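/- arXiv:2403.05707 — 2 statements merged into one kernel-verified Lean document; each statement's English description precedes it below -/
import Mathlib

section
/- In a commutative ℚ-algebra R, if d₁, ..., dₙ ∈ R satisfy dᵢdⱼ = 0 for all i,j, then for any multivariate polynomial p ∈ R[X₁,...,Xₙ] and any point x ∈ Rⁿ, p(x + d) = p(x) + ∑ₖ (∂p/∂Xₖ)(x) · dₖ. -/
/-!
The first-order Taylor expansion `p ↦ p(x) + ∑ₖ ∂ₖp(x) dₖ` is a ring homomorphism once all
products `dᵢ dⱼ` vanish: by the Leibniz rule, the expansion of `p * q` differs from the product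
of the expansions of `p` and `q` only by the product of their first-order parts, which is
quadratic in `d`. It agrees with evaluation at `x + d` on constants and variables, hence
on all polynomials.
-/

open MvPolynomial Finset

section

variable {R σ : Type*} [CommRing R] [Fintype σ]

theorem sum_mul_mul_sum_mul_eq_zero {d : σ → R} (hd : ∀ i j, d i * d j = 0) (a b : σ → R) :
    (∑ i, a i * d i) * (∑ j, b j * d j) = 0 := by
  rw [sum_mul_sum]
  exact sum_eq_zero fun i _ => sum_eq_zero fun j _ => by rw [mul_mul_mul_comm, hd, mul_zero]

namespace MvPolynomial

noncomputable def firstOrderEval (x d : σ → R) (hd : ∀ i j, d i * d j = 0) :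
    MvPolynomial σ R →+* R where
  toFun p := eval x p + ∑ k, eval x (pderiv k p) * d k
  map_one' := by simp
  map_mul' p q := by
    have hpq := sum_mul_mul_sum_mul_eq_zero hd (fun k => eval x (pderiv k p))
      (fun k => eval x (pderiv k q))
    simp only [Derivation.leibniz, map_mul, map_add, smul_eq_mul, add_mul, sum_add_distrib]
    simp only [mul_assoc, ← mul_sum] at hpq ⊢
    linear_combination -hpq
  map_zero' := by simp
  map_add' p q := by
    simp only [map_add, add_mul, sum_add_distrib]
    ring

theorem eval_add_eq_firstOrderEval (x d : σ → R) (hd : ∀ i j, d i * d j = 0) :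
    eval (x + d) = firstOrderEval x d hd := by
  classical
  exact ringHom_ext (fun a => by simp [firstOrderEval])
    (fun i => by simp [firstOrderEval, pderiv_X, Pi.single_apply])

end MvPolynomial

end

theorem polynomial_kock_lawvere_general {R : Type*} [CommRing R]
    (n : ℕ) (d : Fin n → R) (hd : ∀ i j, d i * d j = 0)
    (p : MvPolynomial (Fin n) R) (x : Fin n → R) :
    eval (fun i => x i + d i) p
      = eval x p + ∑ k, eval x (pderiv k p) * d k :=
  RingHom.congr_fun (eval_add_eq_firstOrderEval x d hd) p

/-- Polynomial Kock–Lawvere: in a commutative `ℚ`-algebra, if all pairwise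
products `dᵢdⱼ` vanish, then `p(x + d) = p(x) + ∑ₖ (∂p/∂Xₖ)(x) · dₖ`. -/
theorem polynomial_kock_lawvere {R : Type*} [CommRing R] [Algebra ℚ R]
    (n : ℕ) (d : Fin n → R) (hd : ∀ i j, d i * d j = 0)
    (p : MvPolynomial (Fin n) R) (x : Fin n → R) :
    eval (fun i => x i + d i) p
      = eval x p + ∑ k, eval x (pderiv k p) * d k :=
  polynomial_kock_lawvere_general n d hd p x
end

section
/- Polynomial maps preserve the first-order neighbourhood relation: if φ : Rⁿ → Rᵐ has polynomial components and P, Q ∈ Rⁿ satisfy Q - P ∈ D(n), then φ(Q) - φ(P) ∈ D(m). -/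
open MvPolynomial

lemma eval_sub_mem_span {R : Type*} [CommRing R] {n : ℕ}
    (P Q : Fin n → R) (p : MvPolynomial (Fin n) R) :
    eval Q p - eval P p ∈ Ideal.span (Set.range fun i => Q i - P i) := by
  induction p using MvPolynomial.induction_on with
  | C a => simp
  | add p q hp hq =>
      have : eval Q (p + q) - eval P (p + q)
          = (eval Q p - eval P p) + (eval Q q - eval P q) := by simp; ring
      rw [this]; exact add_mem hp hq
  | mul_X p i hp =>
      have : eval Q (p * X i) - eval P (p * X i)
          = eval Q p * (Q i - P i) + (eval Q p - eval P p) * P i := by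
        simp; ring
      rw [this]
      exact add_mem (Ideal.mul_mem_left _ _ (Ideal.subset_span ⟨i, rfl⟩))
        (Ideal.mul_mem_right _ _ hp)

/-- Polynomial maps preserve the first-order neighbourhood relation: if the
components of `Q - P` have all pairwise products zero, then so do the
components of `φ(Q) - φ(P)` for any polynomial map `φ : Rⁿ → Rᵐ`. -/
theorem polynomial_map_preserves_neighbourhood {R : Type*} [CommRing R]
    [Algebra ℚ R] (n m : ℕ) (φ : Fin m → MvPolynomial (Fin n) R)
    (P Q : Fin n → R) (hPQ : ∀ i j, (Q i - P i) * (Q j - P j) = 0) :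
    ∀ i j : Fin m,
      (eval Q (φ i) - eval P (φ i)) * (eval Q (φ j) - eval P (φ j)) = 0 := by
  intro i j
  set S : Set R := Set.range fun i => Q i - P i
  have hmem : (eval Q (φ i) - eval P (φ i)) * (eval Q (φ j) - eval P (φ j))
      ∈ Ideal.span S * Ideal.span S :=
    Ideal.mul_mem_mul (eval_sub_mem_span P Q (φ i)) (eval_sub_mem_span P Q (φ j))
  have hbot : Ideal.span S * Ideal.span S = ⊥ := by
    rw [Ideal.span_mul_span, Ideal.span_eq_bot]
    intro x hx
    simp only [Set.mem_mul] at hx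
    obtain ⟨a, ⟨i, rfl⟩, b, ⟨j, rfl⟩, rfl⟩ := hx
    exact hPQ i j
  rw [hbot] at hmem
  exact hmem
end
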